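/- Let G' ≤ G be a finite-index subgroup and B a block in G. Then B' = G' ∩ B is a block in G', and B is a block in G if and only if B ∩ G' is a block in G'. Moreover, B ∩ G' is commensurable with B, i.e., has finite index in B. -/

import Mathlib

universe u v

/-- A subgroup `B ≤ G` is virtually (nonabelian free) × ℤ: it has a finite-index
subgroup isomorphic to `F × ℤ` with `F` a nonabelian free group. -/
def IsVirtFNZ {G : Type u} [Group G] (B : Subgroup G) : Prop :=
  ∃ H : Subgroup G, H ≤ B ∧ H.relIndex B ≠ 0 ∧
    ∃ (ι : Type u) (x y : ι), x ≠ y ∧ Nonempty (↥H ≃* FreeGroup ι × Multiplicative ℤ)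

/-- A *block* of `G`: a subgroup virtually of the form (nonabelian free) × ℤ that is
maximal up to commensurability among such subgroups. -/
def IsGroupBlock {G : Type u} [Group G] (B : Subgroup G) : Prop :=
  IsVirtFNZ B ∧ ∀ B' : Subgroup G, IsVirtFNZ B' → B'.relIndex B ≠ 0 → B.relIndex B' ≠ 0

/-- A group is virtually cyclic (possibly finite) if it has a finite-index cyclic subgroup. -/
def IsVirtuallyCyclic (K : Type*) [Group K] : Prop :=
  ∃ H : Subgroup K, H.FiniteIndex ∧ IsCyclic H

/-- `G` has unbranched blocks: any three blocks that pairwise intersect in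
infinite-index subgroups have virtually cyclic triple intersection. -/
def HasUnbranchedBlocks (G : Type u) [Group G] : Prop :=
  ∀ B₁ B₂ B₃ : Subgroup G, IsGroupBlock B₁ → IsGroupBlock B₂ → IsGroupBlock B₃ →
    B₂.relIndex B₁ = 0 → B₃.relIndex B₁ = 0 → B₁.relIndex B₂ = 0 →
    B₃.relIndex B₂ = 0 → B₁.relIndex B₃ = 0 → B₂.relIndex B₃ = 0 →
    IsVirtuallyCyclic ↥(B₁ ⊓ B₂ ⊓ B₃)

/-!
Both notions in the definition of a block are invariant under intersecting with a finite-index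
subgroup `G'`. For commensurability this is index bookkeeping: `X ⊓ G'` has finite index in `X`,
and `X` has finite index relative to `Y` iff `X ⊓ G'` has finite index relative to `Y ⊓ G'`.
For being virtually `F × ℤ`, the point is that a finite-index subgroup `K` of `F × ℤ` contains
`(K ∩ F) × (K ∩ ℤ)` with finite index; here `K ∩ F` is free by Nielsen–Schreier and nonabelian,
since it contains nonzero powers of two distinct generators, and `K ∩ ℤ` is infinite cyclic.
As every subgroup of `G'` has the form `C ⊓ G'`, the maximality conditions in `G` and in `G'`
then quantify over the same data.
-/

open Subgroup

attribute [local instance] Subgroup.isFiniteRelIndex_of_finiteIndex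

namespace FreeGroup

variable {α : Type*}

theorem toWord_of_pow_mul_of_pow (a b : α) (m n : ℕ) [DecidableEq α] :
    (of a ^ m * of b ^ n).toWord = List.replicate m (a, true) ++ List.replicate n (b, true) := by
  rw [toWord_mul, toWord_of_pow, toWord_of_pow]
  refine IsReduced.reduce_eq (List.Pairwise.isChain (List.pairwise_of_forall_mem_list ?_))
  simp +contextual [or_imp]

theorem not_commute_of_pow {a b : α} (hab : a ≠ b) {m n : ℕ} (hm : m ≠ 0) (hn : n ≠ 0) :
    ¬Commute (of a ^ m) (of b ^ n) := by
  classical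
  intro h
  have := congrArg (fun w => w.toWord.head?) h.eq
  simp [toWord_of_pow_mul_of_pow, List.head?_replicate, hm, hn, hab] at this

end FreeGroup

theorem IsFreeGroup.nontrivial_generators_of_not_commute {A : Type*} [Group A] [IsFreeGroup A]
    {a b : A} (hab : ¬Commute a b) : Nontrivial (IsFreeGroup.Generators A) := by
  by_contra hgen
  rw [not_nontrivial_iff_subsingleton] at hgen
  have : IsCyclic (FreeGroup (IsFreeGroup.Generators A)) := by
    cases isEmpty_or_nonempty (IsFreeGroup.Generators A)
    · infer_instance
    · have := uniqueOfSubsingleton (Classical.arbitrary (IsFreeGroup.Generators A))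
      infer_instance
  have : IsCyclic A := (IsFreeGroup.toFreeGroup A).symm.isCyclic.mp this
  exact hab (Std.Commutative.comm a b)

theorem FreeGroup.nontrivial_generators_of_finiteIndex {ι : Type u} {x y : ι} (hxy : x ≠ y)
    (A : Subgroup (FreeGroup ι)) [A.FiniteIndex] : Nontrivial (IsFreeGroup.Generators A) := by
  have hA : A.index ≠ 0 := FiniteIndex.index_ne_zero
  obtain ⟨m, hm, -, hxm⟩ := exists_pow_mem_of_index_ne_zero hA (of x)
  obtain ⟨n, hn, -, hyn⟩ := exists_pow_mem_of_index_ne_zero hA (of y)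
  refine IsFreeGroup.nontrivial_generators_of_not_commute (a := ⟨_, hxm⟩) (b := ⟨_, hyn⟩) ?_
  exact fun h => not_commute_of_pow hxy hm.ne' hn.ne' (congrArg Subtype.val h.eq)

theorem Subgroup.infinite_of_finiteIndex {Γ : Type*} [Group Γ] [Infinite Γ] (H : Subgroup Γ)
    [H.FiniteIndex] : Infinite H := by
  by_contra hfin
  rw [not_infinite_iff_finite] at hfin
  have := (finite_iff_finite_and_finiteIndex H).mpr ⟨hfin, inferInstance⟩
  exact not_finite Γ

instance Subgroup.finiteIndex_comap {Γ Δ : Type*} [Group Γ] [Group Δ] (f : Γ →* Δ)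
    (K : Subgroup Δ) [K.FiniteIndex] : (K.comap f).FiniteIndex :=
  ⟨by rw [index_comap]; exact FiniteIndex.index_ne_zero⟩

theorem Subgroup.prod_comap_inl_comap_inr_le {A Z : Type*} [Group A] [Group Z]
    (K : Subgroup (A × Z)) :
    (K.comap (MonoidHom.inl A Z)).prod (K.comap (MonoidHom.inr A Z)) ≤ K := by
  rintro ⟨a, z⟩ ⟨ha, hz⟩
  simpa using mul_mem (show (a, (1 : Z)) ∈ K from ha) (show ((1 : A), z) ∈ K from hz)

theorem Subgroup.subgroupOf_surjective {G : Type*} [Group G] (G' : Subgroup G) :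
    Function.Surjective fun X : Subgroup G => X.subgroupOf G' :=
  fun C => ⟨C.map G'.subtype, comap_map_eq_self_of_injective G'.subtype_injective C⟩

def IsNonabelianFreeProdInt (K : Type u) [Group K] : Prop :=
  ∃ (ι : Type u) (x y : ι), x ≠ y ∧ Nonempty (K ≃* FreeGroup ι × Multiplicative ℤ)

namespace IsNonabelianFreeProdInt

theorem of_mulEquiv {K L : Type u} [Group K] [Group L] (e : K ≃* L)
    (hL : IsNonabelianFreeProdInt L) : IsNonabelianFreeProdInt K :=
  let ⟨ι, x, y, hxy, ⟨e'⟩⟩ := hL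
  ⟨ι, x, y, hxy, ⟨e.trans e'⟩⟩

theorem prod_comap_inl_comap_inr {ι : Type u} {x y : ι} (hxy : x ≠ y)
    (K : Subgroup (FreeGroup ι × Multiplicative ℤ)) [K.FiniteIndex] :
    IsNonabelianFreeProdInt
      ((K.comap (MonoidHom.inl _ _)).prod (K.comap (MonoidHom.inr _ _))) := by
  set A := K.comap (MonoidHom.inl (FreeGroup ι) (Multiplicative ℤ))
  set Z := K.comap (MonoidHom.inr (FreeGroup ι) (Multiplicative ℤ))
  have : Infinite Z := Z.infinite_of_finiteIndex
  obtain ⟨a, b, hab⟩ := (FreeGroup.nontrivial_generators_of_finiteIndex hxy A).exists_pair_ne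
  exact ⟨_, a, b, hab, ⟨(prodEquiv A Z).trans
    ((IsFreeGroup.toFreeGroup A).prodCongr intCyclicMulEquiv.symm)⟩⟩

theorem exists_le_finiteIndex {Γ : Type u} [Group Γ] (hΓ : IsNonabelianFreeProdInt Γ)
    (K : Subgroup Γ) [K.FiniteIndex] :
    ∃ K' ≤ K, K'.FiniteIndex ∧ IsNonabelianFreeProdInt K' := by
  obtain ⟨ι, x, y, hxy, ⟨e⟩⟩ := hΓ
  set L := K.map (e : Γ →* FreeGroup ι × Multiplicative ℤ)
  have : L.FiniteIndex := ⟨by rw [index_map_equiv]; exact FiniteIndex.index_ne_zero⟩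
  set L' := (L.comap (MonoidHom.inl _ _)).prod (L.comap (MonoidHom.inr _ _))
  refine ⟨L'.map (e.symm : FreeGroup ι × Multiplicative ℤ →* Γ), ?_, ⟨?_⟩, ?_⟩
  · rw [map_le_iff_le_comap, ← map_equiv_eq_comap_symm]
    exact L.prod_comap_inl_comap_inr_le
  · rw [index_map_equiv, index_prod]
    exact mul_ne_zero FiniteIndex.index_ne_zero FiniteIndex.index_ne_zero
  · exact (prod_comap_inl_comap_inr hxy L).of_mulEquiv (e.symm.subgroupMap L').symm

end IsNonabelianFreeProdInt

section VirtFNZ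

variable {G : Type u} [Group G]

theorem IsVirtFNZ.of_le_of_relIndex_ne_zero {D B : Subgroup G} (hB : IsVirtFNZ B) (hDB : D ≤ B)
    (hD : D.relIndex B ≠ 0) : IsVirtFNZ D := by
  obtain ⟨H, hHB, hH, hfree⟩ := hB
  have : (D.subgroupOf H).FiniteIndex := ⟨mt (relIndex_eq_zero_of_le_right hHB) hD⟩
  obtain ⟨K, hKD, hK, hKfree⟩ :=
    IsNonabelianFreeProdInt.exists_le_finiteIndex hfree (D.subgroupOf H)
  have hKH : (K.map H.subtype).relIndex H ≠ 0 := by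
    rw [relIndex, subgroupOf, comap_map_eq_self_of_injective H.subtype_injective]
    exact hK.index_ne_zero
  refine ⟨K.map H.subtype, map_le_iff_le_comap.mpr hKD, ?_,
    IsNonabelianFreeProdInt.of_mulEquiv (K.equivMapOfInjective _ H.subtype_injective).symm hKfree⟩
  exact relIndex_ne_zero_trans hKH (mt (relIndex_eq_zero_of_le_right hDB) hH)

theorem isVirtFNZ_iff_of_le_of_relIndex_ne_zero {D B : Subgroup G} (hDB : D ≤ B)
    (hD : D.relIndex B ≠ 0) : IsVirtFNZ D ↔ IsVirtFNZ B :=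
  ⟨fun ⟨H, hHD, hH, hfree⟩ => ⟨H, hHD.trans hDB, relIndex_ne_zero_trans hH hD, hfree⟩,
    fun hB => hB.of_le_of_relIndex_ne_zero hDB hD⟩

theorem isVirtFNZ_map_iff {N : Type u} [Group N] {f : G →* N} (hf : Function.Injective f)
    (B : Subgroup G) : IsVirtFNZ (B.map f) ↔ IsVirtFNZ B := by
  refine ⟨fun ⟨H, hHB, hH, hfree⟩ => ?_, fun ⟨H, hHB, hH, hfree⟩ => ?_⟩
  · have hH_map : (H.comap f).map f = H := map_comap_eq_self (hHB.trans (map_le_range f B))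
    refine ⟨H.comap f, (comap_mono hHB).trans (comap_map_eq_self_of_injective hf B).le, ?_,
      IsNonabelianFreeProdInt.of_mulEquiv
        (((H.comap f).equivMapOfInjective f hf).trans (.subgroupCongr hH_map)) hfree⟩
    rwa [← relIndex_map_map_of_injective _ _ hf, hH_map]
  · exact ⟨H.map f, map_mono hHB, by rwa [relIndex_map_map_of_injective _ _ hf],
      IsNonabelianFreeProdInt.of_mulEquiv (H.equivMapOfInjective f hf).symm hfree⟩

variable (G' : Subgroup G) [G'.FiniteIndex]

theorem isVirtFNZ_subgroupOf_iff (X : Subgroup G) :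
    IsVirtFNZ (X.subgroupOf G') ↔ IsVirtFNZ X := by
  rw [← isVirtFNZ_map_iff G'.subtype_injective, subgroupOf_map_subtype]
  refine isVirtFNZ_iff_of_le_of_relIndex_ne_zero inf_le_left ?_
  rw [inf_relIndex_left]
  exact relIndex_ne_zero

theorem relIndex_subgroupOf_ne_zero_iff (X Y : Subgroup G) :
    (X.subgroupOf G').relIndex (Y.subgroupOf G') ≠ 0 ↔ X.relIndex Y ≠ 0 := by
  rw [← inf_subgroupOf_right X, ← inf_subgroupOf_right Y, relIndex_subgroupOf inf_le_right]
  refine ⟨fun h => relIndex_ne_zero_trans (mt (relIndex_eq_zero_of_le_left inf_le_left) h) ?_,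
    fun h => mt (relIndex_eq_zero_of_le_right inf_le_left)
      (relIndex_inf_ne_zero h relIndex_ne_zero)⟩
  rw [inf_relIndex_left]
  exact relIndex_ne_zero

theorem isGroupBlock_subgroupOf_iff_isGroupBlock (B : Subgroup G) :
    IsGroupBlock (B.subgroupOf G') ↔ IsGroupBlock B := by
  simp only [IsGroupBlock, (subgroupOf_surjective G').forall, isVirtFNZ_subgroupOf_iff,
    relIndex_subgroupOf_ne_zero_iff]

end VirtFNZ

/-- If `G' ≤ G` has finite index and `B` is a block in `G`, then
`B ∩ G'` is a block in `G'` and has finite index in `B`; moreover `B` is a block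
in `G` if and only if `B ∩ G'` is a block in `G'`. -/
theorem isGroupBlock_subgroupOf_iff {G : Type u} [Group G]
    (G' B : Subgroup G) (hfin : G'.FiniteIndex) :
    (IsGroupBlock B → IsGroupBlock (B.subgroupOf G') ∧ G'.relIndex B ≠ 0) ∧
    (IsGroupBlock B ↔ IsGroupBlock (B.subgroupOf G')) := by
  have hblock := isGroupBlock_subgroupOf_iff_isGroupBlock G' B
  exact ⟨fun hB => ⟨hblock.mpr hB, relIndex_ne_zero⟩, hblock.symm⟩
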